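/- arXiv:1902.08537 — 3 statements merged into one kernel-verified Lean document; each statement's English description precedes it below -/
import Mathlib

section
/- Let ℓ > 0, let P : ℝ → ℝ be continuously differentiable with 0 < P(x) < 1 for all x, set L(x) = x + ℓ/P(x), and let v : ℝ → ℝ be a continuous positive function. Then P satisfies P'(x) = (P(x)²/(ℓ v(x)))·(v(x) − v(L(x))) for all x if and only if there is a constant C > 0 such that ∫_x^{L(x)} 1/v(z) dz = C for all x ∈ ℝ. -/
open Set

/-- A C¹ profile `P` with `0 < P < 1` satisfies the profile ODE if and only if
the travel time `∫_x^{L x} dz / v z` is a positive constant `C` independent of `x`. -/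
theorem stmt4 (ℓ : ℝ) (hℓ : 0 < ℓ) (P v : ℝ → ℝ) (hP : ContDiff ℝ 1 P)
    (hP01 : ∀ x, P x ∈ Ioo (0:ℝ) 1)
    (hvc : Continuous v) (hv : ∀ z, 0 < v z) :
    (∀ x, deriv P x
        = P x ^ 2 / (ℓ * v x) * (v x - v (x + ℓ / P x)))
    ↔ ∃ C : ℝ, 0 < C ∧ ∀ x, (∫ z in x..(x + ℓ / P x), 1 / v z) = C := by
  have hvne : ∀ z, v z ≠ 0 := fun z => (hv z).ne'
  set L : ℝ → ℝ := fun x => x + ℓ / P x with hLdef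
  have hPpos : ∀ x, 0 < P x := fun x => (hP01 x).1
  have hPne : ∀ x, P x ≠ 0 := fun x => (hPpos x).ne'
  have hPdiff : Differentiable ℝ P := hP.differentiable one_ne_zero
  have hcont : Continuous (fun z => 1 / v z) := continuous_const.div hvc hvne
  have hint : ∀ a b : ℝ, IntervalIntegrable (fun z => 1 / v z) MeasureTheory.volume a b :=
    fun a b => hcont.intervalIntegrable a b
  set G : ℝ → ℝ := fun u => ∫ z in (0:ℝ)..u, 1 / v z with hGdef
  have hG : ∀ u, HasDerivAt G (1 / v u) u := fun u =>
    (hcont.integral_hasStrictDerivAt 0 u).hasDerivAt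
  have hF : ∀ x, (∫ z in x..(L x), 1 / v z) = G (L x) - G x := fun x => by
    rw [eq_sub_iff_add_eq, add_comm]
    exact intervalIntegral.integral_add_adjacent_intervals (hint 0 x) (hint x (L x))
  have hLd : ∀ x, HasDerivAt L (1 - ℓ * deriv P x / P x ^ 2) x := fun x => by
    have h1 : HasDerivAt P (deriv P x) x := (hPdiff x).hasDerivAt
    have h2 : HasDerivAt (fun y => ℓ / P y) ((0 * P x - ℓ * deriv P x) / P x ^ 2) x :=
      (hasDerivAt_const x ℓ).div h1 (hPne x)
    have h3 : HasDerivAt (fun y => y + ℓ / P y) (1 + (0 * P x - ℓ * deriv P x) / P x ^ 2) x :=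
      (hasDerivAt_id x).add h2
    convert h3 using 1
    field_simp
    ring
  have hFd : ∀ x, HasDerivAt (fun x => G (L x) - G x)
      ((1 / v (L x)) * (1 - ℓ * deriv P x / P x ^ 2) - 1 / v x) x := fun x =>
    (((hG (L x)).comp x (hLd x)).sub (hG x))
  constructor
  · intro hODE
    have hzero : ∀ x, HasDerivAt (fun x => G (L x) - G x) 0 x := fun x => by
      have h := hFd x
      rw [hODE x] at h
      have harg : v (x + ℓ / P x) = v (L x) := rfl
      rw [harg] at h
      convert h using 1
      have hvL := hvne (L x)
      have hvx := hvne x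
      have hPx := hPne x
      have hl := hℓ.ne'
      field_simp
      ring
    have hdiff : Differentiable ℝ (fun x => G (L x) - G x) :=
      fun x => (hzero x).differentiableAt
    have hderiv0 : ∀ x, deriv (fun x => G (L x) - G x) x = 0 :=
      fun x => (hzero x).deriv
    have hconst := is_const_of_deriv_eq_zero hdiff hderiv0
    refine ⟨G (L 0) - G 0, ?_, fun x => by rw [hF x]; exact hconst x 0⟩
    rw [← hF 0]
    apply intervalIntegral.intervalIntegral_pos_of_pos (hint 0 (L 0))
    · intro z
      have := hv z
      positivity
    · show (0:ℝ) < 0 + ℓ / P 0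
      have := hPpos 0
      positivity
  · rintro ⟨C, hC, hConst⟩ x
    have hFc : (fun x => G (L x) - G x) = fun _ => C :=
      funext fun y => by rw [← hF y]; exact hConst y
    have h0 : HasDerivAt (fun x => G (L x) - G x) 0 x := by
      rw [hFc]; exact hasDerivAt_const x C
    have heq := (hFd x).unique h0
    have hvL := hvne (L x)
    have hvx := hvne x
    have hPx := hPne x
    have hl := hℓ.ne'
    have harg : x + ℓ / P x = L x := rfl
    rw [harg]
    field_simp at heq ⊢
    linear_combination -heq
end

section
/- Let ℓ > 0 and let P : ℝ → (0,1) be continuous with lim_{x→∞} P(x) = ρ⁺ ∈ (0,1). Let v : ℝ → ℝ be continuous positive with lim_{x→∞} v(x) = V⁺·φ(ρ⁺), where V⁺ > 0 and φ is continuous with φ(ρ⁺) > 0. If ∫_x^{x+ℓ/P(x)} 1/v(z) dz = ℓ/f̄ for all x and some constant f̄ > 0, then V⁺·ρ⁺·φ(ρ⁺) = f̄. -/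
open Set Filter

/-- asymptotic flux: if `P → ρ⁺` and `v → V⁺ φ(ρ⁺)` at `+∞` and the
period identity `∫_x^{x+ℓ/P x} dz / v z = ℓ / f̄` holds for all `x`, then
`V⁺ ρ⁺ φ(ρ⁺) = f̄`. -/
theorem stmt12 (ℓ fbar Vp ρp : ℝ) (hℓ : 0 < ℓ) (hf : 0 < fbar) (hV : 0 < Vp)
    (hρ : ρp ∈ Ioo (0:ℝ) 1)
    (φ : ℝ → ℝ) (hφc : Continuous φ) (hφ : 0 < φ ρp)
    (P : ℝ → ℝ) (hPc : Continuous P) (hP01 : ∀ x, P x ∈ Ioo (0:ℝ) 1)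
    (hPlim : Tendsto P atTop (nhds ρp))
    (v : ℝ → ℝ) (hvc : Continuous v) (hv : ∀ z, 0 < v z)
    (hvlim : Tendsto v atTop (nhds (Vp * φ ρp)))
    (hper : ∀ x, (∫ z in x..(x + ℓ / P x), 1 / v z) = ℓ / fbar) :
    Vp * ρp * φ ρp = fbar := by
  set L : ℝ := Vp * φ ρp with hLdef
  have hL0 : 0 < L := mul_pos hV hφ
  have hρ0 : 0 < ρp := hρ.1
  have hfc : Continuous (fun z => 1 / v z) := by
    simp only [one_div]
    exact hvc.inv₀ (fun z => (hv z).ne')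
  have hd : Tendsto (fun x => ℓ / P x) atTop (nhds (ℓ / ρp)) :=
    tendsto_const_nhds.div hPlim hρ0.ne'
  have hinv : Tendsto (fun z => 1 / v z) atTop (nhds (1 / L)) := by
    simpa [one_div] using hvlim.inv₀ hL0.ne'
  have hG : Tendsto (fun x => (ℓ / P x) * (1 / L)) atTop (nhds ((ℓ / ρp) * (1 / L))) :=
    hd.mul tendsto_const_nhds
  set M : ℝ := ℓ / ρp + 1 with hMdef
  have hM0 : 0 < M := by positivity
  have hdbd : ∀ᶠ x in atTop, ℓ / P x ≤ M :=
    hd.eventually (eventually_le_nhds (by linarith))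
  have hdiff : Tendsto
      (fun x => (∫ z in x..(x + ℓ / P x), 1 / v z) - (ℓ / P x) * (1 / L))
      atTop (nhds 0) := by
    rw [Metric.tendsto_nhds]
    intro ε hε
    set δ : ℝ := ε / (2 * M) with hδdef
    have hδ0 : 0 < δ := by positivity
    have h1 : ∀ᶠ z in atTop, |1 / v z - 1 / L| ≤ δ := by
      filter_upwards [Metric.tendsto_nhds.mp hinv δ hδ0] with z hz
      exact le_of_lt (by simpa [Real.dist_eq] using hz)
    obtain ⟨x₀, hx₀⟩ := eventually_atTop.mp h1
    filter_upwards [hdbd, eventually_ge_atTop x₀] with x hxbd hxx₀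
    have hdx0 : 0 < ℓ / P x := div_pos hℓ (hP01 x).1
    have hint : (∫ z in x..(x + ℓ / P x), 1 / v z) - (ℓ / P x) * (1 / L)
        = ∫ z in x..(x + ℓ / P x), (1 / v z - 1 / L) := by
      rw [intervalIntegral.integral_sub (hfc.intervalIntegrable _ _)
        (intervalIntegrable_const), intervalIntegral.integral_const, smul_eq_mul,
        add_sub_cancel_left]
    have hbound : ‖∫ z in x..(x + ℓ / P x), (1 / v z - 1 / L)‖
        ≤ δ * |(x + ℓ / P x) - x| := by
      apply intervalIntegral.norm_integral_le_of_norm_le_const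
      intro z hz
      have hz' : z ∈ Ioc x (x + ℓ / P x) := by
        rwa [Set.uIoc_of_le (by linarith)] at hz
      exact hx₀ z (le_trans hxx₀ hz'.1.le)
    rw [Real.dist_eq, sub_zero, hint]
    have : |(x + ℓ / P x) - x| = ℓ / P x := by
      rw [add_sub_cancel_left, abs_of_pos hdx0]
    rw [this] at hbound
    calc |∫ z in x..(x + ℓ / P x), (1 / v z - 1 / L)|
        ≤ δ * (ℓ / P x) := hbound
      _ ≤ δ * M := by nlinarith
      _ = ε / 2 := by
          rw [hδdef, div_mul_eq_mul_div, div_eq_div_iff (mul_pos two_pos hM0).ne' two_ne_zero]; ring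
      _ < ε := by linarith
  have hF : Tendsto (fun x => (∫ z in x..(x + ℓ / P x), 1 / v z)) atTop
      (nhds ((ℓ / ρp) * (1 / L))) := by
    have := hdiff.add hG
    simpa using this
  have hFc : Tendsto (fun x => (∫ z in x..(x + ℓ / P x), 1 / v z)) atTop
      (nhds (ℓ / fbar)) := by
    simp only [hper]
    exact tendsto_const_nhds
  have heq : ℓ / fbar = (ℓ / ρp) * (1 / L) := tendsto_nhds_unique hFc hF
  have hL : ρp * L = fbar := by
    rw [div_mul_div_comm, mul_one, div_eq_div_iff hf.ne' (mul_pos hρ0 hL0).ne'] at heq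
    exact mul_left_cancel₀ hℓ.ne' heq
  nlinarith [hL]
end

section
/- Let ℓ > 0, f̄ > 0 and let v : ℝ → (0,∞) be continuous. Let Pₙ : ℝ → (0,1) be continuous functions converging uniformly on compact sets to P : ℝ → (0,1), with P continuous and inf P > 0. Suppose each Pₙ satisfies the averaged identity Pₙ(x)/f̄ = average over z ∈ [x, x+ℓₙ/Pₙ(x)] of 1/vₙ(z), where ℓₙ → 0 and vₙ → v uniformly on compact sets. Then P(x)·v(x) = f̄ for all x ∈ ℝ. -/
open Set Filter

/-- micro-macro limit of the period identity: with `ℓₙ → 0`,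
`vₙ → v` and `Pₙ → P` uniformly on compacts, `c ≤ vₙ ≤ C`, `inf P > 0`, and the
averaged identity `Pₙ x / f̄ = (Pₙ x / ℓₙ) ∫_x^{x+ℓₙ/Pₙ x} dz / vₙ z` for every
`n` and `x`, the limit satisfies `P x * v x = f̄` for all `x`. -/
theorem stmt17 (fbar : ℝ) (hf : 0 < fbar)
    (ℓ : ℕ → ℝ) (hℓpos : ∀ n, 0 < ℓ n) (hℓ : Tendsto ℓ atTop (nhds 0))
    (vn : ℕ → ℝ → ℝ) (v : ℝ → ℝ)
    (hvnc : ∀ n, Continuous (vn n)) (hvc : Continuous v)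
    (c C : ℝ) (hc : 0 < c) (hcC : c ≤ C)
    (hbound : ∀ n z, c ≤ vn n z ∧ vn n z ≤ C)
    (hvconv : ∀ Kset : Set ℝ, IsCompact Kset → TendstoUniformlyOn vn v atTop Kset)
    (Pn : ℕ → ℝ → ℝ) (P : ℝ → ℝ)
    (hPnc : ∀ n, Continuous (Pn n)) (hPc : Continuous P)
    (hPn01 : ∀ n x, Pn n x ∈ Ioo (0:ℝ) 1) (hP01 : ∀ x, P x ∈ Ioo (0:ℝ) 1)
    (m : ℝ) (hm : 0 < m) (hmP : ∀ x, m ≤ P x)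
    (hPconv : ∀ Kset : Set ℝ, IsCompact Kset → TendstoUniformlyOn Pn P atTop Kset)
    (hid : ∀ n x, Pn n x / fbar
      = (Pn n x / ℓ n) * ∫ z in x..(x + ℓ n / Pn n x), 1 / vn n z) :
    ∀ x, P x * v x = fbar := by
  intro x
  have hvpt : ∀ z : ℝ, Tendsto (fun n => vn n z) atTop (nhds (v z)) := fun z =>
    (hvconv {z} isCompact_singleton).tendsto_at (mem_singleton z)
  have hvc' : ∀ z, c ≤ v z := fun z =>
    ge_of_tendsto (hvpt z) (Eventually.of_forall fun n => (hbound n z).1)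
  have hvpos : ∀ z, 0 < v z := fun z => lt_of_lt_of_le hc (hvc' z)
  have hPpt : Tendsto (fun n => Pn n x) atTop (nhds (P x)) :=
    (hPconv {x} isCompact_singleton).tendsto_at (mem_singleton x)
  have hPx : 0 < P x := (hP01 x).1
  have hεpos : ∀ n, 0 < ℓ n / Pn n x := fun n => div_pos (hℓpos n) (hPn01 n x).1
  have hεtend : Tendsto (fun n => ℓ n / Pn n x) atTop (nhds 0) := by
    have := hℓ.div hPpt (ne_of_gt hPx)
    rw [zero_div] at this; exact this
  have hmain : Tendsto (fun n => (Pn n x / ℓ n) * ∫ z in x..(x + ℓ n / Pn n x), 1 / vn n z)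
      atTop (nhds (1 / v x)) := by
    rw [Metric.tendsto_atTop]
    intro ε hε
    set ε' := ε * c ^ 2 / 8 with hε'def
    have hε'pos : 0 < ε' := by positivity
    obtain ⟨δ, hδpos, hδ⟩ := Metric.continuousAt_iff.mp hvc.continuousAt ε' hε'pos
    have hunif := (Metric.tendstoUniformlyOn_iff.mp
      (hvconv (Icc x (x + 1)) isCompact_Icc)) ε' hε'pos
    have hεsmall : ∀ᶠ n in atTop, ℓ n / Pn n x < min δ 1 :=
      hεtend.eventually_lt_const (lt_min hδpos one_pos)
    obtain ⟨N, hN⟩ := eventually_atTop.mp (hunif.and hεsmall)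
    refine ⟨N, fun n hn => ?_⟩
    obtain ⟨hun, hsm⟩ := hN n hn
    set en := ℓ n / Pn n x with hen
    have henpos : 0 < en := hεpos n
    have hsmδ : en < δ := lt_of_lt_of_le hsm (min_le_left δ 1)
    have hsm1 : en < 1 := lt_of_lt_of_le hsm (min_le_right δ 1)
    -- pointwise bound on the integrand difference
    have hpt : ∀ z ∈ Icc x (x + en), ‖1 / vn n z - 1 / v x‖ ≤ 2 * ε' / c ^ 2 := by
      intro z hz
      have hz1 : z ∈ Icc x (x + 1) := ⟨hz.1, hz.2.trans (by linarith)⟩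
      have hzδ : dist z x < δ := by
        rw [Real.dist_eq, abs_of_nonneg (by linarith [hz.1])]
        linarith [hz.2]
      have h1 : dist (v z) (vn n z) < ε' := hun z hz1
      have h2 : dist (v z) (v x) < ε' := hδ hzδ
      have hvnz : c ≤ vn n z := (hbound n z).1
      have hvnzpos : 0 < vn n z := lt_of_lt_of_le hc hvnz
      have key : |v x - vn n z| ≤ 2 * ε' := by
        rw [Real.dist_eq] at h1 h2
        calc |v x - vn n z| ≤ |v x - v z| + |v z - vn n z| := abs_sub_le _ _ _
          _ ≤ 2 * ε' := by rw [abs_sub_comm (v x)]; linarith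
      have heq : 1 / vn n z - 1 / v x = (v x - vn n z) / (vn n z * v x) := by
        rw [div_sub_div _ _ (ne_of_gt hvnzpos) (ne_of_gt (hvpos x)), one_mul, mul_one]
      rw [Real.norm_eq_abs, heq, abs_div, abs_of_pos (mul_pos hvnzpos (hvpos x))]
      have hden : c ^ 2 ≤ vn n z * v x := by nlinarith [hvc' x]
      exact div_le_div₀ (by positivity) key (by positivity) hden
    -- integrability
    have hint : IntervalIntegrable (fun z => 1 / vn n z) MeasureTheory.volume x (x + en) := by
      apply Continuous.intervalIntegrable
      exact continuous_const.div (hvnc n) fun z => ne_of_gt (lt_of_lt_of_le hc (hbound n z).1)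
    -- integral estimate
    have hbnd : ‖(∫ z in x..(x + en), 1 / vn n z) - en * (1 / v x)‖
        ≤ 2 * ε' / c ^ 2 * |x + en - x| := by
      have hsub : (∫ z in x..(x + en), 1 / vn n z) - en * (1 / v x)
          = ∫ z in x..(x + en), (1 / vn n z - 1 / v x) := by
        rw [intervalIntegral.integral_sub hint (intervalIntegrable_const)]
        simp [intervalIntegral.integral_const]
      rw [hsub]
      apply intervalIntegral.norm_integral_le_of_norm_le_const
      intro z hz
      rw [Set.uIoc_of_le (by linarith : x ≤ x + en)] at hz
      exact hpt z ⟨le_of_lt hz.1, hz.2⟩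
    have habs : |x + en - x| = en := by
      rw [show x + en - x = en by ring, abs_of_pos henpos]
    rw [habs] at hbnd
    have hPne : Pn n x ≠ 0 := ne_of_gt (hPn01 n x).1
    have hlne : ℓ n ≠ 0 := ne_of_gt (hℓpos n)
    have hPl : Pn n x / ℓ n = 1 / en := by
      rw [hen]; field_simp
    rw [Real.dist_eq, hPl]
    have hexp : 1 / en * (∫ z in x..(x + en), 1 / vn n z) - 1 / v x
        = 1 / en * ((∫ z in x..(x + en), 1 / vn n z) - en * (1 / v x)) := by
      have hene : en ≠ 0 := ne_of_gt henpos
      field_simp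
    rw [hexp, abs_mul, abs_of_pos (by positivity : (0:ℝ) < 1 / en)]
    have hfinal : 2 * ε' / c ^ 2 = ε / 4 := by
      rw [hε'def]; field_simp; ring
    have hstep : 1 / en * |(∫ z in x..(x + en), 1 / vn n z) - en * (1 / v x)|
        ≤ 1 / en * (2 * ε' / c ^ 2 * en) := by
      apply mul_le_mul_of_nonneg_left _ (by positivity)
      rw [← Real.norm_eq_abs]
      exact hbnd
    have hene : en ≠ 0 := ne_of_gt henpos
    have hcol : 1 / en * (2 * ε' / c ^ 2 * en) = 2 * ε' / c ^ 2 := by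
      field_simp
    rw [hcol] at hstep
    rw [hfinal] at hstep
    linarith
  -- conclude
  have hleft : Tendsto (fun n => Pn n x / fbar) atTop (nhds (P x / fbar)) :=
    hPpt.div_const fbar
  have hleft' : Tendsto (fun n => Pn n x / fbar) atTop (nhds (1 / v x)) := by
    have hfun : (fun n => Pn n x / fbar)
        = fun n => (Pn n x / ℓ n) * ∫ z in x..(x + ℓ n / Pn n x), 1 / vn n z := by
      funext n; exact hid n x
    rw [hfun]; exact hmain
  have heq : P x / fbar = 1 / v x := tendsto_nhds_unique hleft hleft'
  have hvx : v x ≠ 0 := ne_of_gt (hvpos x)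
  have hfne : fbar ≠ 0 := ne_of_gt hf
  field_simp at heq
  linarith [heq]
end
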